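/- Let A be a commutative unital complex Banach algebra whose Gelfand transform image is self-adjoint, i.e., for every a ∈ A there exists b ∈ A such that φ(b) = conj(φ(a)) for every character φ of A. Then there do not exist a sequence (φ_n)_{n∈ℕ} of pairwise distinct characters on A and a sequence (λ_n)_{n∈ℕ} of complex numbers with ∑_{n=1}^∞ |λ_n| < ∞, not all λ_n zero, such that ∑_{n=1}^∞ λ_n φ_n(a) = 0 for every a ∈ A. -/

import Mathlib

open WeakDual Filter Topology

/-!
Self-adjointness makes the Gelfand image a point-separating star subalgebra of `C(Φ, ℂ)`, `Φ` the
character space, hence dense by Stone–Weierstrass. The functional `f ↦ ∑ λₙ f(φₙ)` is continuous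
on `C(Φ, ℂ)`, so it vanishes identically. Testing it against Urysohn functions equal to `1` at
`φₖ` and to `0` at `φₙ` for `n < m`, `n ≠ k`, and letting `m → ∞` by dominated convergence gives
`λₖ = 0`.
-/

section PointEvaluations

variable {X 𝕜 : Type*} [TopologicalSpace X] [RCLike 𝕜]

theorem ContinuousMap.exists_apply_eq_one_eqOn_zero [NormalSpace X] [T1Space X] {s : Set X}
    {y : X} (hs : IsClosed s) (hy : y ∉ s) :
    ∃ f : C(X, 𝕜), f y = 1 ∧ Set.EqOn f 0 s ∧ ∀ z, ‖f z‖ ≤ 1 := by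
  obtain ⟨g, hg0, hg1, hg01⟩ := exists_continuous_zero_one_of_isClosed hs isClosed_singleton
    (Set.disjoint_singleton_right.2 hy)
  refine ⟨⟨fun z => (g z : 𝕜), by fun_prop⟩, ?_, fun z hz => ?_, fun z => ?_⟩
  · simp [hg1 rfl]
  · simp [hg0 hz]
  · simpa [abs_of_nonneg (hg01 z).1] using (hg01 z).2

theorem continuous_tsum_mul_apply [CompactSpace X] {x : ℕ → X} {l : ℕ → 𝕜}
    (hl : Summable fun n => ‖l n‖) : Continuous fun f : C(X, 𝕜) => ∑' n, l n * f (x n) := by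
  refine continuous_iff_continuousAt.2 fun f₀ => ?_
  have hnear : ∀ᶠ f in 𝓝 f₀, ‖f‖ < ‖f₀‖ + 1 :=
    (continuous_norm.tendsto f₀).eventually (gt_mem_nhds (lt_add_one _))
  refine tendsto_tsum_of_dominated_convergence (hl.mul_right (‖f₀‖ + 1))
    (fun n => ((continuous_eval_const (x n)).const_mul (l n)).tendsto f₀) ?_
  filter_upwards [hnear] with f hf n
  rw [norm_mul]
  exact mul_le_mul_of_nonneg_left ((f.norm_coe_le_norm _).trans hf.le) (norm_nonneg _)

theorem eq_zero_of_forall_tsum_mul_apply_eq_zero [NormalSpace X] [T1Space X] {x : ℕ → X}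
    (hx : x.Injective) {l : ℕ → 𝕜} (hl : Summable fun n => ‖l n‖)
    (h : ∀ f : C(X, 𝕜), ∑' n, l n * f (x n) = 0) : l = 0 := by
  ext k
  have hbump (m : ℕ) : ∃ f : C(X, 𝕜), f (x k) = 1 ∧ (∀ n < m, n ≠ k → f (x n) = 0) ∧
      ∀ z, ‖f z‖ ≤ 1 := by
    obtain ⟨f, hfk, hf0, hf1⟩ := ContinuousMap.exists_apply_eq_one_eqOn_zero (𝕜 := 𝕜)
      (((Set.finite_lt_nat m).inter_of_left {n | n ≠ k}).image x).isClosed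
      (y := x k) fun ⟨n, ⟨_, hnk⟩, hn⟩ => hnk (hx hn)
    exact ⟨f, hfk, fun n hnm hnk => hf0 ⟨n, ⟨hnm, hnk⟩, rfl⟩, hf1⟩
  choose f hfk hf0 hf1 using hbump
  have hterm (n : ℕ) : Tendsto (fun m => l n * f m (x n)) atTop
      (𝓝 (if n = k then l k else 0)) := by
    split_ifs with hnk
    · subst hnk
      simp [hfk]
    · refine tendsto_const_nhds.congr' ?_
      filter_upwards [eventually_gt_atTop n] with m hm
      simp [hf0 m n hm hnk]
  have hlim := tendsto_tsum_of_dominated_convergence hl hterm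
    (Eventually.of_forall fun m n => by
      simpa using mul_le_of_le_one_right (norm_nonneg (l n)) (hf1 m (x n)))
  simp only [h, tsum_ite_eq] at hlim
  exact tendsto_nhds_unique hlim tendsto_const_nhds

end PointEvaluations

theorem denseRange_gelfandTransform_of_forall_exists_conj {A : Type*} [NormedCommRing A]
    [NormedAlgebra ℂ A] [CompleteSpace A]
    (hsa : ∀ a : A, ∃ b : A, ∀ φ : characterSpace ℂ A, φ b = starRingEnd ℂ (φ a)) :
    DenseRange (gelfandTransform ℂ A) := by
  let R : StarSubalgebra ℂ C(characterSpace ℂ A, ℂ) :=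
    { toSubalgebra := (gelfandTransform ℂ A).range
      star_mem' := by
        rintro f ⟨a, rfl⟩
        obtain ⟨b, hb⟩ := hsa a
        exact ⟨b, by ext ψ; simpa using hb ψ⟩ }
  have hsep : R.SeparatesPoints := by
    intro φ ψ hφψ
    obtain ⟨a, ha⟩ := DFunLike.ne_iff.mp hφψ
    exact ⟨_, ⟨gelfandTransform ℂ A a, ⟨a, rfl⟩, rfl⟩, by simpa using ha⟩
  have hdense := ContinuousMap.starSubalgebra_topologicalClosure_eq_top_of_separatesPoints R hsep
  rw [DenseRange, dense_iff_closure_eq, ← AlgHom.coe_range]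
  change closure (R : Set C(characterSpace ℂ A, ℂ)) = Set.univ
  rw [← StarSubalgebra.topologicalClosure_coe, hdense, StarSubalgebra.coe_top]

/-- If the Gelfand transform image of a commutative unital complex Banach algebra `A` is
self-adjoint, then no nonzero absolutely summable linear combination of pairwise distinct
characters on `A` vanishes. -/
theorem no_vanishing_lin_comb_characters_of_selfAdjoint
    {A : Type*} [NormedCommRing A] [NormedAlgebra ℂ A] [CompleteSpace A]
    (hsa : ∀ a : A, ∃ b : A, ∀ φ : characterSpace ℂ A, φ b = starRingEnd ℂ (φ a)) :
    ¬ ∃ (φ : ℕ → characterSpace ℂ A) (l : ℕ → ℂ),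
        Function.Injective φ ∧ (Summable fun n => ‖l n‖) ∧ (∃ n, l n ≠ 0) ∧
        ∀ a : A, ∑' n, l n * φ n a = 0 := by
  rintro ⟨φ, l, hφ, hl, ⟨k, hk⟩, hvan⟩
  have hzero (f : C(characterSpace ℂ A, ℂ)) : ∑' n, l n * f (φ n) = 0 :=
    (denseRange_gelfandTransform_of_forall_exists_conj hsa).induction_on f
      (isClosed_eq (continuous_tsum_mul_apply hl) continuous_const) hvan
  exact hk (congrFun (eq_zero_of_forall_tsum_mul_apply_eq_zero hφ hl hzero) k)
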